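/- Let N > p, let F = QT be a real N×p matrix with QᵀQ = I_p and T an invertible p×p matrix, let D be a diagonal N×N matrix with nonnegative entries such that R = QᵀDQ is invertible, and set A = FᵀF, M_0 = FᵀDF, S = QᵀD²Q, U = R^{-1}SR^{-1}. Then for any σ² ≥ 0 and κ > 0, the maximum over τ ∈ ℝ^N satisfying Fᵀτ = 0 and ‖τ‖ = κ of σ² tr(A M_0^{-1}) + κ² + (FᵀDτ)ᵀ M_0^{-1} A M_0^{-1} (FᵀDτ) equals σ² tr(R^{-1}) + κ² λ_max(U), where λ_max denotes the largest eigenvalue. -/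

import Mathlib

/-!
With `B = R⁻¹QᵀD - Qᵀ`, the objective on the constraint set (`Fᵀτ = 0 ↔ Qᵀτ = 0`) is
`σ² tr R⁻¹ + κ² + ‖Bτ‖²`, and `BBᵀ = U - 1`. So it remains to see that the maximum of `‖Bτ‖²` over
`τ ∈ ker Qᵀ`, `‖τ‖ = κ`, is `κ² λ_max(BBᵀ)`. The bound is Cauchy–Schwarz applied to
`‖Bτ‖² = ⟪BᵀBτ, τ⟫`. As the columns of `Bᵀ` lie in `ker Qᵀ`, the maximum is attained at a multiple of
`Bᵀv` for a top eigenvector `v` of `U`; if `λ_max(BBᵀ) = 0`, at any vector of `ker Qᵀ`, which is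
nonzero because `N > p`.
-/

open Matrix

lemma transpose_weighted_gram_eq_self {m n : Type*} [Fintype n] {Q : Matrix n m ℝ}
    {D : Matrix n n ℝ} {R : Matrix m m ℝ} (hD : Dᵀ = D) (hR : R = Qᵀ * D * Q) : Rᵀ = R := by
  rw [hR, transpose_mul, transpose_mul, transpose_transpose, hD, Matrix.mul_assoc]

variable {m n : Type*} [Fintype m] [Fintype n]

lemma dotProduct_self_nonneg (x : n → ℝ) : 0 ≤ x ⬝ᵥ x :=
  Finset.sum_nonneg fun _ _ ↦ mul_self_nonneg _

lemma dotProduct_sq_le_mul (x y : n → ℝ) : (x ⬝ᵥ y) ^ 2 ≤ (x ⬝ᵥ x) * (y ⬝ᵥ y) := by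
  simpa [dotProduct, pow_two] using Finset.sum_mul_sq_le_sq_mul_sq Finset.univ x y

lemma mulVec_dotProduct_eq_dotProduct_transpose_mulVec (A : Matrix m n ℝ) (x : n → ℝ)
    (y : m → ℝ) : (A *ᵥ x) ⬝ᵥ y = x ⬝ᵥ (Aᵀ *ᵥ y) := by
  rw [dotProduct_mulVec, vecMul_transpose]

lemma transpose_mulVec_dotProduct_self (B : Matrix m n ℝ) (x : m → ℝ) :
    (Bᵀ *ᵥ x) ⬝ᵥ (Bᵀ *ᵥ x) = x ⬝ᵥ ((B * Bᵀ) *ᵥ x) := by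
  rw [mulVec_dotProduct_eq_dotProduct_transpose_mulVec, transpose_transpose, mulVec_mulVec]

lemma mul_mulVec_eq_zero_iff [DecidableEq m] {A : Matrix m m ℝ} (hA : IsUnit A)
    (B : Matrix m n ℝ) (x : n → ℝ) : (A * B) *ᵥ x = 0 ↔ B *ᵥ x = 0 := by
  rw [← mulVec_mulVec]
  exact (mulVec_injective_iff_isUnit.mpr hA).eq_iff' (mulVec_zero A)

lemma exists_smul_dotProduct_self_eq {w : n → ℝ} (hw : w ≠ 0) {c : ℝ} (hc : 0 ≤ c) :
    ∃ s : ℝ, (s • w) ⬝ᵥ (s • w) = c := by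
  have hw' : 0 < w ⬝ᵥ w :=
    (dotProduct_self_nonneg w).lt_of_ne (Ne.symm (mt dotProduct_self_eq_zero.mp hw))
  refine ⟨√(c / w ⬝ᵥ w), ?_⟩
  rw [smul_dotProduct, dotProduct_smul, smul_smul, smul_eq_mul,
    Real.mul_self_sqrt (by positivity), div_mul_cancel₀ _ hw'.ne']

lemma mulVec_dotProduct_self_le (B : Matrix m n ℝ) {μ : ℝ} (hμ : 0 ≤ μ)
    (hB : ∀ x, x ⬝ᵥ ((B * Bᵀ) *ᵥ x) ≤ μ * (x ⬝ᵥ x)) (τ : n → ℝ) :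
    (B *ᵥ τ) ⬝ᵥ (B *ᵥ τ) ≤ μ * (τ ⬝ᵥ τ) := by
  set c := (B *ᵥ τ) ⬝ᵥ (B *ᵥ τ)
  have hsq : c * c ≤ (μ * (τ ⬝ᵥ τ)) * c :=
    calc c * c = ((Bᵀ *ᵥ (B *ᵥ τ)) ⬝ᵥ τ) ^ 2 := by
          rw [sq, dotProduct_comm _ τ, ← mulVec_dotProduct_eq_dotProduct_transpose_mulVec]
      _ ≤ ((Bᵀ *ᵥ (B *ᵥ τ)) ⬝ᵥ (Bᵀ *ᵥ (B *ᵥ τ))) * (τ ⬝ᵥ τ) := dotProduct_sq_le_mul _ _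
      _ ≤ (μ * c) * (τ ⬝ᵥ τ) := by
          rw [transpose_mulVec_dotProduct_self]
          exact mul_le_mul_of_nonneg_right (hB _) (dotProduct_self_nonneg τ)
      _ = (μ * (τ ⬝ᵥ τ)) * c := by ring
  rcases (show 0 ≤ c from dotProduct_self_nonneg _).eq_or_lt with hc0 | hcpos
  · rw [← hc0]
    exact mul_nonneg hμ (dotProduct_self_nonneg τ)
  · exact le_of_mul_le_mul_right hsq hcpos

theorem isGreatest_mulVec_dotProduct_self (B : Matrix m n ℝ) {K : Submodule ℝ (n → ℝ)}
    (hK : K ≠ ⊥) (hBK : ∀ x, Bᵀ *ᵥ x ∈ K) {μ : ℝ}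
    (hB : ∀ x, x ⬝ᵥ ((B * Bᵀ) *ᵥ x) ≤ μ * (x ⬝ᵥ x)) {v : m → ℝ} (hv : v ⬝ᵥ v = 1)
    (hBv : (B * Bᵀ) *ᵥ v = μ • v) (κ : ℝ) :
    IsGreatest {c | ∃ τ ∈ K, τ ⬝ᵥ τ = κ ^ 2 ∧ c = (B *ᵥ τ) ⬝ᵥ (B *ᵥ τ)} (κ ^ 2 * μ) := by
  have hμ : μ = (Bᵀ *ᵥ v) ⬝ᵥ (Bᵀ *ᵥ v) := by
    rw [transpose_mulVec_dotProduct_self, hBv, dotProduct_smul, hv, smul_eq_mul, mul_one]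
  refine ⟨?_, ?_⟩
  · rcases (dotProduct_self_nonneg (Bᵀ *ᵥ v)).eq_or_lt with h0 | hpos
    · obtain ⟨w, hwK, hw⟩ := Submodule.exists_mem_ne_zero_of_ne_bot hK
      obtain ⟨s, hs⟩ := exists_smul_dotProduct_self_eq hw (sq_nonneg κ)
      have hμ0 : μ = 0 := hμ.trans h0.symm
      have hle := mulVec_dotProduct_self_le B hμ0.ge hB (s • w)
      rw [hμ0, zero_mul] at hle
      rw [hμ0, mul_zero]
      exact ⟨s • w, K.smul_mem s hwK, hs, (hle.antisymm (dotProduct_self_nonneg _)).symm⟩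
    · obtain ⟨s, hs⟩ := exists_smul_dotProduct_self_eq (w := Bᵀ *ᵥ v)
        (fun h ↦ hpos.ne' (by rw [h, dotProduct_zero])) (sq_nonneg κ)
      refine ⟨s • (Bᵀ *ᵥ v), K.smul_mem s (hBK v), hs, ?_⟩
      rw [mulVec_smul, mulVec_mulVec, hBv, smul_smul, smul_dotProduct, dotProduct_smul, hv, ← hs,
        smul_dotProduct, dotProduct_smul, ← hμ]
      simp only [smul_eq_mul]
      ring
  · rintro c ⟨τ, -, hτ, rfl⟩
    rw [← hτ, mul_comm]
    exact mulVec_dotProduct_self_le B (hμ ▸ dotProduct_self_nonneg _) hB τ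

namespace Matrix.IsHermitian

variable [DecidableEq n] {A : Matrix n n ℝ} (hA : A.IsHermitian)
include hA

lemma le_iSup_eigenvalues (i : n) : hA.eigenvalues i ≤ ⨆ j, hA.eigenvalues j :=
  le_ciSup (Set.finite_range _).bddAbove i

lemma dotProduct_mulVec_le_iSup_eigenvalues (x : n → ℝ) :
    x ⬝ᵥ (A *ᵥ x) ≤ (⨆ i, hA.eigenvalues i) * (x ⬝ᵥ x) := by
  set V : Matrix n n ℝ := (hA.eigenvectorUnitary : Matrix n n ℝ)
  have hA' : A = V * diagonal hA.eigenvalues * Vᵀ := by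
    conv_lhs => rw [hA.spectral_theorem]
    simp [V, Unitary.conjStarAlgAut_apply, star_eq_conjTranspose]
  have hVV : V * Vᵀ = 1 := by
    simpa [star_eq_conjTranspose] using mem_unitaryGroup_iff.mp hA.eigenvectorUnitary.2
  have hxx : x ⬝ᵥ x = (Vᵀ *ᵥ x) ⬝ᵥ (Vᵀ *ᵥ x) := by
    rw [mulVec_dotProduct_eq_dotProduct_transpose_mulVec, transpose_transpose, mulVec_mulVec, hVV,
      one_mulVec]
  set w := Vᵀ *ᵥ x
  have hxAx : x ⬝ᵥ (A *ᵥ x) = ∑ i, hA.eigenvalues i * (w i * w i) := by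
    have hAx : A *ᵥ x = V *ᵥ (diagonal hA.eigenvalues *ᵥ w) := by
      conv_lhs => rw [hA']
      simp only [w, mulVec_mulVec, Matrix.mul_assoc]
    rw [hAx, dotProduct_comm, mulVec_dotProduct_eq_dotProduct_transpose_mulVec]
    simp only [dotProduct, mulVec_diagonal, mul_assoc, w]
  rw [hxAx, hxx, dotProduct, Finset.mul_sum]
  gcongr with i
  · exact mul_self_nonneg _
  · exact hA.le_iSup_eigenvalues i

lemma exists_mulVec_eq_iSup_eigenvalues_smul [Nonempty n] :
    ∃ v : n → ℝ, v ⬝ᵥ v = 1 ∧ A *ᵥ v = (⨆ i, hA.eigenvalues i) • v := by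
  obtain ⟨i, hi⟩ := Finite.exists_max hA.eigenvalues
  have hmax : (⨆ j, hA.eigenvalues j) = hA.eigenvalues i :=
    (ciSup_le hi).antisymm (hA.le_iSup_eigenvalues i)
  refine ⟨hA.eigenvectorBasis i, ?_, hmax ▸ hA.mulVec_eigenvectorBasis i⟩
  have h : ‖hA.eigenvectorBasis i‖ ^ 2 = 1 := by rw [hA.eigenvectorBasis.orthonormal.1 i, one_pow]
  rwa [← real_inner_self_eq_norm_sq, EuclideanSpace.inner_eq_star_dotProduct, star_trivial] at h

end Matrix.IsHermitian

section Reparametrization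

variable [DecidableEq m] {T : Matrix m m ℝ} (hT : IsUnit T) (R : Matrix m m ℝ)
include hT

lemma trace_gram_mul_inv_weighted_gram : ((Tᵀ * T) * (Tᵀ * R * T)⁻¹).trace = R⁻¹.trace := by
  have hTd := (isUnit_iff_isUnit_det T).mp hT
  have hTtd : IsUnit Tᵀ.det := by rwa [det_transpose]
  rw [Matrix.mul_inv_rev, Matrix.mul_inv_rev, Matrix.mul_assoc,
    mul_nonsing_inv_cancel_left _ _ hTd, trace_mul_comm, Matrix.mul_assoc,
    nonsing_inv_mul _ hTtd, Matrix.mul_one]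

lemma transpose_mulVec_dotProduct_inv_sandwich_mulVec (hR : Rᵀ = R) (z : m → ℝ) :
    (Tᵀ *ᵥ z) ⬝ᵥ (((Tᵀ * R * T)⁻¹ * (Tᵀ * T) * (Tᵀ * R * T)⁻¹) *ᵥ (Tᵀ *ᵥ z)) =
      (R⁻¹ *ᵥ z) ⬝ᵥ (R⁻¹ *ᵥ z) := by
  have hTd := (isUnit_iff_isUnit_det T).mp hT
  have hTtd : IsUnit Tᵀ.det := by rwa [det_transpose]
  have hsandwich :
      T * ((Tᵀ * R * T)⁻¹ * (Tᵀ * T) * (Tᵀ * R * T)⁻¹) * Tᵀ = R⁻¹ * R⁻¹ := by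
    simp only [Matrix.mul_inv_rev, Matrix.mul_assoc]
    rw [nonsing_inv_mul_cancel_left _ _ hTtd, mul_nonsing_inv_cancel_left _ _ hTd,
      mul_nonsing_inv_cancel_left _ _ hTd, nonsing_inv_mul _ hTtd, Matrix.mul_one]
  rw [mulVec_dotProduct_eq_dotProduct_transpose_mulVec, transpose_transpose, mulVec_mulVec,
    mulVec_mulVec, hsandwich, ← mulVec_mulVec, mulVec_dotProduct_eq_dotProduct_transpose_mulVec,
    transpose_nonsing_inv, hR]

end Reparametrization

section Bias

variable {Q : Matrix n m ℝ} {D : Matrix n n ℝ} {R : Matrix m m ℝ}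

lemma weighted_gram_mul_right_eq (hR : R = Qᵀ * D * Q) (T : Matrix m m ℝ) :
    (Q * T)ᵀ * D * (Q * T) = Tᵀ * R * T := by
  rw [hR, transpose_mul]
  simp only [Matrix.mul_assoc]

variable [DecidableEq m]

lemma gram_mul_right_eq (hQ : Qᵀ * Q = 1) (T : Matrix m m ℝ) : (Q * T)ᵀ * (Q * T) = Tᵀ * T := by
  rw [transpose_mul, Matrix.mul_assoc, ← Matrix.mul_assoc Qᵀ, hQ, Matrix.one_mul]

/-- On `ker Qᵀ` this is the bias `τ ↦ R⁻¹QᵀDτ`; the correction `- Qᵀ` puts its rows in `ker Qᵀ`. -/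
noncomputable def biasMatrix (Q : Matrix n m ℝ) (D : Matrix n n ℝ) (R : Matrix m m ℝ) :
    Matrix m n ℝ :=
  R⁻¹ * Qᵀ * D - Qᵀ

lemma biasMatrix_mulVec_of_mulVec_eq_zero {τ : n → ℝ} (hτ : Qᵀ *ᵥ τ = 0) :
    biasMatrix Q D R *ᵥ τ = R⁻¹ *ᵥ ((Qᵀ * D) *ᵥ τ) := by
  rw [biasMatrix, sub_mulVec, hτ, sub_zero, mulVec_mulVec, Matrix.mul_assoc]

lemma transpose_biasMatrix (hD : Dᵀ = D) (hR : R = Qᵀ * D * Q) :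
    (biasMatrix Q D R)ᵀ = D * Q * R⁻¹ - Q := by
  rw [biasMatrix, transpose_sub, transpose_mul, transpose_mul, transpose_nonsing_inv,
    transpose_weighted_gram_eq_self hD hR, hD, transpose_transpose, Matrix.mul_assoc]

lemma transpose_mul_transpose_biasMatrix (hQ : Qᵀ * Q = 1) (hD : Dᵀ = D)
    (hR : R = Qᵀ * D * Q) (hRu : IsUnit R) : Qᵀ * (biasMatrix Q D R)ᵀ = 0 := by
  rw [transpose_biasMatrix hD hR, Matrix.mul_sub, ← Matrix.mul_assoc, ← Matrix.mul_assoc, ← hR,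
    mul_nonsing_inv R ((isUnit_iff_isUnit_det R).mp hRu), hQ, sub_self]

lemma biasMatrix_mul_transpose [DecidableEq n] (hQ : Qᵀ * Q = 1) (hD : Dᵀ = D)
    (hR : R = Qᵀ * D * Q) (hRu : IsUnit R) :
    biasMatrix Q D R * (biasMatrix Q D R)ᵀ = R⁻¹ * (Qᵀ * D ^ 2 * Q) * R⁻¹ - 1 := by
  have hRd := (isUnit_iff_isUnit_det R).mp hRu
  have hQDQ : Qᵀ * (D * Q) = R := by rw [hR, Matrix.mul_assoc]
  have hRR : R⁻¹ * (Qᵀ * (D * Q)) = 1 := by rw [hQDQ, nonsing_inv_mul R hRd]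
  have hRR' : Qᵀ * (D * (Q * R⁻¹)) = 1 := by
    rw [← Matrix.mul_assoc D, ← Matrix.mul_assoc, hQDQ, mul_nonsing_inv R hRd]
  rw [transpose_biasMatrix hD hR, biasMatrix, sq]
  simp only [Matrix.sub_mul, Matrix.mul_sub, Matrix.mul_assoc]
  rw [hRR, hRR', hQ]
  abel

theorem isGreatest_biasMatrix_mulVec_dotProduct_self [DecidableEq n] [Nonempty m]
    (hmn : Fintype.card m < Fintype.card n) (hQ : Qᵀ * Q = 1) (hD : Dᵀ = D)
    (hR : R = Qᵀ * D * Q) (hRu : IsUnit R) {S : Matrix m m ℝ} (hS : S = Qᵀ * D ^ 2 * Q)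
    (hU : (R⁻¹ * S * R⁻¹).IsHermitian) (κ : ℝ) :
    IsGreatest {c | ∃ τ, Qᵀ *ᵥ τ = 0 ∧ τ ⬝ᵥ τ = κ ^ 2 ∧
        c = (biasMatrix Q D R *ᵥ τ) ⬝ᵥ (biasMatrix Q D R *ᵥ τ)}
      (κ ^ 2 * ((⨆ i, hU.eigenvalues i) - 1)) := by
  have hBB : biasMatrix Q D R * (biasMatrix Q D R)ᵀ = R⁻¹ * S * R⁻¹ - 1 :=
    hS ▸ biasMatrix_mul_transpose hQ hD hR hRu
  obtain ⟨v, hv, hUv⟩ := hU.exists_mulVec_eq_iSup_eigenvalues_smul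
  refine isGreatest_mulVec_dotProduct_self _ (K := LinearMap.ker Qᵀ.mulVecLin)
    (LinearMap.ker_ne_bot_of_finrank_lt (by simpa using hmn)) (fun x ↦ ?_) (fun x ↦ ?_) hv ?_ κ
  · rw [LinearMap.mem_ker, mulVecLin_apply, mulVec_mulVec,
      transpose_mul_transpose_biasMatrix hQ hD hR hRu, zero_mulVec]
  · rw [hBB, sub_mulVec, one_mulVec, dotProduct_sub, sub_mul, one_mul]
    linarith [hU.dotProduct_mulVec_le_iSup_eigenvalues x]
  · rw [hBB, sub_mulVec, one_mulVec, hUv, sub_smul, one_smul]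

variable {F : Matrix n m ℝ} {T : Matrix m m ℝ}

lemma trace_gram_mul_inv_weighted_gram_of_eq_mul (hF : F = Q * T) (hQ : Qᵀ * Q = 1)
    (hT : IsUnit T) (hR : R = Qᵀ * D * Q) :
    ((Fᵀ * F) * (Fᵀ * D * F)⁻¹).trace = R⁻¹.trace := by
  rw [hF, gram_mul_right_eq hQ, weighted_gram_mul_right_eq hR,
    trace_gram_mul_inv_weighted_gram hT]

lemma dotProduct_sandwich_eq_biasMatrix_mulVec_dotProduct_self (hF : F = Q * T)
    (hQ : Qᵀ * Q = 1) (hT : IsUnit T) (hD : Dᵀ = D) (hR : R = Qᵀ * D * Q) {τ : n → ℝ}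
    (hτ : Qᵀ *ᵥ τ = 0) :
    ((Fᵀ * D) *ᵥ τ) ⬝ᵥ (((Fᵀ * D * F)⁻¹ * (Fᵀ * F) * (Fᵀ * D * F)⁻¹) *ᵥ ((Fᵀ * D) *ᵥ τ)) =
      (biasMatrix Q D R *ᵥ τ) ⬝ᵥ (biasMatrix Q D R *ᵥ τ) := by
  have hFD : (Fᵀ * D) *ᵥ τ = Tᵀ *ᵥ ((Qᵀ * D) *ᵥ τ) := by
    rw [hF, transpose_mul, mulVec_mulVec, Matrix.mul_assoc]
  rw [hFD, hF, gram_mul_right_eq hQ, weighted_gram_mul_right_eq hR,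
    transpose_mulVec_dotProduct_inv_sandwich_mulVec hT R (transpose_weighted_gram_eq_self hD hR),
    biasMatrix_mulVec_of_mulVec_eq_zero hτ]

end Bias

theorem stmt_5_general {N p : ℕ} (hp : 0 < p) (hNp : p < N)
    (F Q : Matrix (Fin N) (Fin p) ℝ) (T : Matrix (Fin p) (Fin p) ℝ)
    (hF : F = Q * T) (hQ : Qᵀ * Q = 1) (hT : IsUnit T)
    (d : Fin N → ℝ)
    (D : Matrix (Fin N) (Fin N) ℝ) (hD : D = Matrix.diagonal d)
    (R S : Matrix (Fin p) (Fin p) ℝ)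
    (hR : R = Qᵀ * D * Q) (hS : S = Qᵀ * D ^ 2 * Q)
    (hRinv : IsUnit R)
    (hU : (R⁻¹ * S * R⁻¹).IsHermitian)
    (σ2 κ : ℝ) :
    IsGreatest
      {v : ℝ | ∃ τ : Fin N → ℝ, Fᵀ *ᵥ τ = 0 ∧ (∑ i, τ i ^ 2 = κ ^ 2) ∧
        v = σ2 * ((Fᵀ * F) * (Fᵀ * D * F)⁻¹).trace + κ ^ 2 +
            ((Fᵀ * D) *ᵥ τ) ⬝ᵥ
              (((Fᵀ * D * F)⁻¹ * (Fᵀ * F) * (Fᵀ * D * F)⁻¹) *ᵥ ((Fᵀ * D) *ᵥ τ))}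
      (σ2 * (R⁻¹).trace + κ ^ 2 * (⨆ i, hU.eigenvalues i)) := by
  have : Nonempty (Fin p) := ⟨⟨0, hp⟩⟩
  have hDt : Dᵀ = D := hD ▸ diagonal_transpose d
  have hker (τ : Fin N → ℝ) : Fᵀ *ᵥ τ = 0 ↔ Qᵀ *ᵥ τ = 0 := by
    rw [hF, transpose_mul, mul_mulVec_eq_zero_iff ((isUnit_transpose T).mpr hT)]
  have hsum (τ : Fin N → ℝ) : ∑ i, τ i ^ 2 = τ ⬝ᵥ τ := by simp only [dotProduct, sq]
  have hset : {v : ℝ | ∃ τ : Fin N → ℝ, Fᵀ *ᵥ τ = 0 ∧ (∑ i, τ i ^ 2 = κ ^ 2) ∧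
        v = σ2 * ((Fᵀ * F) * (Fᵀ * D * F)⁻¹).trace + κ ^ 2 +
            ((Fᵀ * D) *ᵥ τ) ⬝ᵥ
              (((Fᵀ * D * F)⁻¹ * (Fᵀ * F) * (Fᵀ * D * F)⁻¹) *ᵥ ((Fᵀ * D) *ᵥ τ))} =
      (σ2 * R⁻¹.trace + κ ^ 2 + ·) '' {c | ∃ τ, Qᵀ *ᵥ τ = 0 ∧ τ ⬝ᵥ τ = κ ^ 2 ∧
        c = (biasMatrix Q D R *ᵥ τ) ⬝ᵥ (biasMatrix Q D R *ᵥ τ)} := by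
    ext c
    simp only [Set.mem_ofPred_eq, Set.mem_image, hker, hsum,
      trace_gram_mul_inv_weighted_gram_of_eq_mul hF hQ hT hR]
    constructor
    · rintro ⟨τ, hτQ, hτ, rfl⟩
      exact ⟨_, ⟨τ, hτQ, hτ, rfl⟩,
        by rw [dotProduct_sandwich_eq_biasMatrix_mulVec_dotProduct_self hF hQ hT hDt hR hτQ]⟩
    · rintro ⟨_, ⟨τ, hτQ, hτ, rfl⟩, rfl⟩
      exact ⟨τ, hτQ, hτ,
        by rw [dotProduct_sandwich_eq_biasMatrix_mulVec_dotProduct_self hF hQ hT hDt hR hτQ]⟩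
  rw [hset, show σ2 * R⁻¹.trace + κ ^ 2 * (⨆ i, hU.eigenvalues i) =
    σ2 * R⁻¹.trace + κ ^ 2 + κ ^ 2 * ((⨆ i, hU.eigenvalues i) - 1) by ring]
  exact (monotone_id.const_add _).map_isGreatest
    (isGreatest_biasMatrix_mulVec_dotProduct_self (by simpa using hNp) hQ hDt hR hRinv hS hU κ)

/-- Theorem 2 of the paper, algebraic form: the maximum of the
integrated mean squared error over the contamination class equals
σ² tr(R⁻¹) + κ² λ_max(U), with U = R⁻¹ S R⁻¹. -/
theorem stmt_5 {N p : ℕ} (hp : 0 < p) (hNp : p < N)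
    (F Q : Matrix (Fin N) (Fin p) ℝ) (T : Matrix (Fin p) (Fin p) ℝ)
    (hF : F = Q * T) (hQ : Qᵀ * Q = 1) (hT : IsUnit T)
    (d : Fin N → ℝ) (hd : ∀ i, 0 ≤ d i)
    (D : Matrix (Fin N) (Fin N) ℝ) (hD : D = Matrix.diagonal d)
    (R S : Matrix (Fin p) (Fin p) ℝ)
    (hR : R = Qᵀ * D * Q) (hS : S = Qᵀ * D ^ 2 * Q)
    (hRinv : IsUnit R)
    (hU : (R⁻¹ * S * R⁻¹).IsHermitian)
    (σ2 κ : ℝ) (hσ : 0 ≤ σ2) (hκ : 0 < κ) :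
    IsGreatest
      {v : ℝ | ∃ τ : Fin N → ℝ, Fᵀ *ᵥ τ = 0 ∧ (∑ i, τ i ^ 2 = κ ^ 2) ∧
        v = σ2 * ((Fᵀ * F) * (Fᵀ * D * F)⁻¹).trace + κ ^ 2 +
            ((Fᵀ * D) *ᵥ τ) ⬝ᵥ
              (((Fᵀ * D * F)⁻¹ * (Fᵀ * F) * (Fᵀ * D * F)⁻¹) *ᵥ ((Fᵀ * D) *ᵥ τ))}
      (σ2 * (R⁻¹).trace + κ ^ 2 * (⨆ i, hU.eigenvalues i)) :=
  stmt_5_general hp hNp F Q T hF hQ hT d D hD R S hR hS hRinv hU σ2 κ
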